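/- Every 5-dimensional naturally graded quasi-filiform complex Zinbiel algebra of type A_(1) is isomorphic to one of the following three pairwise non-isomorphic algebras (basis e_1, …, e_5; unlisted products of basis vectors are zero): KF_5^1: e_1∘e_1 = e_2, e_1∘e_2 = e_3, e_2∘e_1 = 2e_3 (i.e. e_i∘e_j = C(i+j−1, j)e_{i+j} for 2 ≤ i+j ≤ 3); KF_5^2: e_1∘e_4 = e_2, e_4∘e_1 = −e_2, e_1∘e_2 = e_3; KF_5^3: e_1∘e_4 = e_2, e_4∘e_1 = −e_2, e_1∘e_2 = e_3, e_5∘e_2 = e_3. -/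

import Mathlib

/-!
The grading has dimensions `(3, 1, 1)`. Writing `A₂ = ℂ e₂` and `A₃ = ℂ e₃`, the products on
`A₁` are `x∘y = β(x,y) e₂`, `x∘e₂ = L(x) e₃`, `e₂∘x = R(x) e₃`, and the Zinbiel identity reduces
to `β(x,y) R(z) = L(x) (β(y,z) + β(z,y))`; `A³ ≠ 0` forces `L ≠ 0` and `A₂ ≠ 0` forces `β ≠ 0`.
If `R = 0` then `β` is alternating, otherwise `β = c L ⊗ L`. In the second case take `L(u) ≠ 0`
and `v, w` spanning `ker L`: this is `KF_5^1`. In the first case the alternating form on the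
three-dimensional `A₁` has a radical vector `w`; take `L(u) ≠ 0 = L(v)` with `β(u,v) ≠ 0` and
rescale `w` so that `L(w) ∈ {0, L(u)}`, which gives `KF_5^2` or `KF_5^3`. In each case the basis
is `u, u∘t, u∘(u∘t), v, w` (with `t = u`, resp. `t = v`), and all remaining products follow from
the Zinbiel identity and the grading.

The three algebras are told apart by two invariants: in `KF_5^2` and `KF_5^3`, but not in
`KF_5^1`, every square `x∘x` annihilates `A` from the left; in `KF_5^2` every right annihilator
of `A` kills `A∘A` from the left, while `e_5` in `KF_5^3` does not.
-/

/-- A complex Zinbiel algebra structure on the module `A`: a bilinear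
multiplication satisfying `(x∘y)∘z = x∘(y∘z) + x∘(z∘y)`. -/
structure ZinbielStr (A : Type*) [AddCommGroup A] [Module ℂ A] where
  mul : A →ₗ[ℂ] A →ₗ[ℂ] A
  zinbiel : ∀ x y z : A, mul (mul x y) z = mul x (mul y z) + mul x (mul z y)

namespace ZinbielStr

variable {A : Type*} [AddCommGroup A] [Module ℂ A]

/-- `M.lcs k` is the term `A^k` of the lower central series for `k ≥ 1`
(`A^1 = A`, `A^{k+1} = span (A ∘ A^k)`), with the convention `M.lcs 0 = ⊤`. -/
def lcs (M : ZinbielStr A) : ℕ → Submodule ℂ A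
  | 0 => ⊤
  | 1 => ⊤
  | k + 2 => Submodule.span ℂ {z | ∃ a b, b ∈ lcs M (k + 1) ∧ z = M.mul a b}

/-- A Zinbiel algebra is nilpotent when some term of the lower central series vanishes. -/
def IsNilpotent (M : ZinbielStr A) : Prop := ∃ s, 1 ≤ s ∧ M.lcs s = ⊥

/-- `Ag` is a natural grading of `M` with parts `Ag 1, …, Ag t`:
the parts are independent, `A_i ∘ A_j ⊆ A_{i+j}` (with `A_k = 0` for `k > t` and `k = 0`),
and `A^k = A_k ⊕ A_{k+1} ⊕ ⋯ ⊕ A_t` for all `1 ≤ k ≤ t`. -/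
structure IsNaturalGrading (M : ZinbielStr A) (t : ℕ) (Ag : ℕ → Submodule ℂ A) : Prop where
  zero_deg : Ag 0 = ⊥
  high_deg : ∀ k, t < k → Ag k = ⊥
  indep : iSupIndep Ag
  mul_mem : ∀ i j x y, x ∈ Ag i → y ∈ Ag j → M.mul x y ∈ Ag (i + j)
  lcs_eq : ∀ k, 1 ≤ k → k ≤ t → M.lcs k = ⨆ j, ⨆ (_ : k ≤ j), Ag j

/-- An `n`-dimensional Zinbiel algebra is quasi-filiform if `A^{n-2} ≠ 0` and `A^{n-1} = 0`. -/
def IsQuasiFiliform (M : ZinbielStr A) (n : ℕ) : Prop :=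
  Module.finrank ℂ A = n ∧ M.lcs (n - 2) ≠ ⊥ ∧ M.lcs (n - 1) = ⊥

end ZinbielStr

open Module Submodule

theorem iSup_ge_eq_sup_iSup_ge {α : Type*} [CompleteLattice α] (f : ℕ → α) (k : ℕ) :
    ⨆ j, ⨆ (_ : k ≤ j), f j = f k ⊔ ⨆ j, ⨆ (_ : k + 1 ≤ j), f j := by
  have h := iSup_ge_eq_iSup_nat_add f
  simp only [ge_iff_le] at h
  rw [h, h, ← sup_iSup_nat_succ]
  simp only [zero_add, add_right_comm _ 1 k, add_assoc]

section LinearAlgebra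

variable {K V : Type*} [Field K] [AddCommGroup V] [Module K V]

theorem exists_eq_span_singleton_of_finrank_eq_one {S : Submodule K V} (h : finrank K S = 1) :
    ∃ e ≠ 0, S = K ∙ e := by
  obtain ⟨e, he, he₀⟩ := exists_mem_ne_zero_of_ne_bot (p := S) (by rintro rfl; simp at h)
  exact ⟨e, he₀, eq_span_singleton_of_mem_of_finrank_eq_one h he he₀⟩

theorem eq_smul_of_mem_span_singleton {e y : V} {φ : Dual K V} (hφ : φ e = 1)
    (hy : y ∈ K ∙ e) : y = φ y • e := by
  obtain ⟨a, rfl⟩ := mem_span_singleton.1 hy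
  simp [hφ]

variable (K) in
theorem eq_zero_of_add_self_eq_zero [CharZero K] {x : V} (h : x + x = 0) : x = 0 := by
  rw [← two_smul K] at h
  exact (smul_eq_zero.1 h).resolve_left two_ne_zero

theorem LinearMap.mem_of_forall_basis_mem {W U ι κ : Type*} [AddCommGroup W] [Module K W]
    [AddCommGroup U] [Module K U] (b : Basis ι K V) (b' : Basis κ K W) (f : V →ₗ[K] W →ₗ[K] U)
    {S : Submodule K U} (h : ∀ i j, f (b i) (b' j) ∈ S) (x : V) (y : W) : f x y ∈ S := by
  have hf : f.compr₂ S.mkQ = 0 :=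
    LinearMap.ext_basis b b' fun i j => by simpa [Quotient.mk_eq_zero] using h i j
  simpa [Quotient.mk_eq_zero] using LinearMap.congr_fun₂ hf x y

theorem isAlt_or_exists_eq_mul_mul [CharZero K] {β : V →ₗ[K] V →ₗ[K] K} {L R : V →ₗ[K] K}
    (hL : L ≠ 0) (hZ : ∀ x y z, β x y * R z = L x * (β y z + β z y)) :
    β.IsAlt ∨ ∃ c : K, ∀ x y, β x y = c * L x * L y := by
  obtain ⟨x₀, hx₀⟩ : ∃ x, L x ≠ 0 := by simpa using DFunLike.ne_iff.1 hL
  by_cases hR : R = 0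
  · refine Or.inl fun y => add_self_eq_zero.1 ?_
    have h := hZ x₀ y y
    rw [hR, LinearMap.zero_apply, mul_zero] at h
    exact (mul_eq_zero.1 h.symm).resolve_left hx₀
  obtain ⟨z, hz⟩ : ∃ z, R z ≠ 0 := by simpa using DFunLike.ne_iff.1 hR
  -- antisymmetrizing the relation in `y, z` makes `β x` proportional to `R`
  have hβ : ∀ x y, β x y = 2 * β z z / R z ^ 2 * L x * R y := by
    intro x y
    field_simp
    linear_combination R z * (hZ x y z - hZ x z y) + R y * hZ x z z
  set d := 2 * β z z / R z ^ 2
  by_cases hd : d = 0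
  · exact Or.inr ⟨0, fun x y => by rw [hβ, hd]; ring⟩
  have hRL : ∀ y w, R y * R w = L y * R w + L w * R y := by
    intro y w
    apply mul_left_cancel₀ (mul_ne_zero hd hx₀)
    have h := hZ x₀ y w
    rw [hβ x₀ y, hβ y w, hβ w y] at h
    linear_combination h
  have hz2 : R z = 2 * L z := mul_right_cancel₀ hz (by linear_combination hRL z z)
  have hLz : L z ≠ 0 := fun h => hz (by rw [hz2, h, mul_zero])
  have hR2 : ∀ y, R y = 2 * L y := fun y =>
    mul_left_cancel₀ hLz (by linear_combination hRL y z - (R y - L y) * hz2)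
  exact Or.inr ⟨2 * d, fun x y => by rw [hβ, hR2]; ring⟩

theorem exists_apply_ne_zero_and_apply_ne_zero {β : V →ₗ[K] V →ₗ[K] K} {L : V →ₗ[K] K}
    (hL : L ≠ 0) (hβ : β ≠ 0) : ∃ x y, L x ≠ 0 ∧ β x y ≠ 0 := by
  obtain ⟨x₀, hx₀⟩ : ∃ x, L x ≠ 0 := by simpa using DFunLike.ne_iff.1 hL
  obtain ⟨x₁, y, hxy⟩ : ∃ x y, β x y ≠ 0 := by simpa [DFunLike.ne_iff] using hβ
  by_cases hx₁ : L x₁ = 0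
  · by_cases h₀ : β x₀ y = 0
    · exact ⟨x₀ + x₁, y, by simpa [hx₁] using hx₀, by simpa [h₀] using hxy⟩
    · exact ⟨x₀, y, hx₀, h₀⟩
  · exact ⟨x₁, y, hx₁, hxy⟩

theorem LinearMap.IsAlt.exists_ne_zero_forall_apply_eq_zero {β : V →ₗ[K] V →ₗ[K] K}
    (hβ : β.IsAlt) (hV : finrank K V = 3) : ∃ w ≠ 0, ∀ x, β w x = 0 := by
  have := Module.finite_of_finrank_eq_succ hV
  let b := finBasisOfFinrankEq K V hV
  have hβb : ∀ i j, β (b j) (b i) = -β (b i) (b j) := fun i j => (hβ.neg _ _).symm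
  -- the axial vector of the skew-symmetric Gram matrix of `β`
  set ρ := β (b 1) (b 2) • b 0 - β (b 0) (b 2) • b 1 + β (b 0) (b 1) • b 2
  by_cases hρ : ρ = 0
  · have hc := Fintype.linearIndependent_iff.1 b.linearIndependent
      ![β (b 1) (b 2), -β (b 0) (b 2), β (b 0) (b 1)]
      (by simpa [Fin.sum_univ_three, ← sub_eq_add_neg] using hρ)
    have h12 : β (b 1) (b 2) = 0 := hc 0
    have h02 : β (b 0) (b 2) = 0 := neg_eq_zero.1 (hc 1)
    have h01 : β (b 0) (b 1) = 0 := hc 2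
    have hzero : β = 0 := LinearMap.ext_basis b b fun i j => by
      fin_cases i <;> fin_cases j <;>
        simp [hβ.self_eq_zero, h01, h02, h12, hβb 0 1, hβb 0 2, hβb 1 2]
    exact ⟨b 0, b.ne_zero 0, by simp [hzero]⟩
  · refine ⟨ρ, hρ, fun x => ?_⟩
    suffices β ρ = 0 by simp [this]
    refine b.ext fun i => ?_
    fin_cases i <;> simp [ρ, hβ.self_eq_zero, hβb 0 1, hβb 0 2, hβb 1 2] <;> ring

theorem exists_linearIndependent_of_ker {L : V →ₗ[K] K} (hL : L ≠ 0) (hV : finrank K V = 3) :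
    ∃ u v w, LinearIndependent K ![u, v, w] ∧ L u ≠ 0 ∧ L v = 0 ∧ L w = 0 := by
  obtain ⟨u, hu⟩ : ∃ x, L x ≠ 0 := by simpa using DFunLike.ne_iff.1 hL
  have := Module.finite_of_finrank_eq_succ hV
  have hker : finrank K (LinearMap.ker L) = 2 := by
    have := Module.Dual.finrank_ker_add_one_of_ne_zero hL
    omega
  let b := finBasisOfFinrankEq K (LinearMap.ker L) hker
  refine ⟨u, b 0, b 1, linearIndependent_finCons.2 ⟨?_, fun hspan => hu ?_⟩, hu, (b 0).2, (b 1).2⟩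
  · have hb : ![(b 0 : V), b 1] = (LinearMap.ker L).subtype ∘ b := by
      ext i
      fin_cases i <;> rfl
    rw [hb]
    exact b.linearIndependent.map' _ (LinearMap.ker L).ker_subtype
  · refine LinearMap.mem_ker.1 (span_le.2 ?_ hspan)
    rintro _ ⟨i, rfl⟩
    fin_cases i <;> simp

theorem LinearMap.IsAlt.exists_linearIndependent {β : V →ₗ[K] V →ₗ[K] K} {L : V →ₗ[K] K}
    (hβ : β.IsAlt) (hβ₀ : β ≠ 0) (hL : L ≠ 0) (hV : finrank K V = 3) :
    ∃ u v w, LinearIndependent K ![u, v, w] ∧ L u ≠ 0 ∧ L v = 0 ∧ β u v ≠ 0 ∧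
      (∀ x, β w x = 0) ∧ (L w = 0 ∨ L w = L u) := by
  obtain ⟨u, y, hu, huy⟩ := exists_apply_ne_zero_and_apply_ne_zero hL hβ₀
  set v := y - (L y / L u) • u
  have hv : L v = 0 := by simp [v, hu]
  have huv : β u v = β u y := by simp [v, hβ.self_eq_zero]
  have hindep : ∀ w ≠ 0, (∀ x, β w x = 0) → LinearIndependent K ![u, v, w] := by
    intro w hw hwβ
    have hβw : β u w = 0 := by rw [← hβ.neg, hwβ, neg_zero]
    refine linearIndependent_finCons.2 ⟨LinearIndependent.pair_iff.2 fun s t hst => ?_, ?_⟩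
    · have hs : s = 0 := by
        have h := congrArg (β u) hst
        simp only [map_add, map_smul, hβw, smul_eq_mul, mul_zero, add_zero, map_zero] at h
        exact (mul_eq_zero.1 h).resolve_right (huv ▸ huy)
      exact ⟨hs, by simpa [hs, hw] using hst⟩
    · intro hspan
      have hle : span K (Set.range ![v, w]) ≤ LinearMap.ker (β.flip v) := by
        refine span_le.2 ?_
        rintro _ ⟨i, rfl⟩
        fin_cases i <;> simp [hβ.self_eq_zero, hwβ]
      exact (huv ▸ huy) (hle hspan)
  obtain ⟨ρ, hρ, hρβ⟩ := hβ.exists_ne_zero_forall_apply_eq_zero hV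
  by_cases hLρ : L ρ = 0
  · exact ⟨u, v, ρ, hindep ρ hρ hρβ, hu, hv, huv ▸ huy, hρβ, Or.inl hLρ⟩
  · refine ⟨u, v, (L u / L ρ) • ρ, hindep _ (smul_ne_zero (div_ne_zero hu hLρ) hρ) ?_, hu, hv,
      huv ▸ huy, ?_, Or.inr ?_⟩
    · intro x; simp [hρβ]
    · intro x; simp [hρβ]
    · simp [hLρ]

end LinearAlgebra

namespace ZinbielStr

variable {A : Type*} [AddCommGroup A] [Module ℂ A]

theorem lcs_two_eq_span (M : ZinbielStr A) :
    M.lcs 2 = span ℂ {z | ∃ a b, z = M.mul a b} := by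
  simp [lcs]

theorem lcs_two_le (M : ZinbielStr A) {S : Submodule ℂ A} (h : ∀ a b, M.mul a b ∈ S) :
    M.lcs 2 ≤ S := by
  rw [lcs_two_eq_span, span_le]
  rintro _ ⟨a, b, rfl⟩
  exact h a b

theorem lcs_three_eq_bot (M : ZinbielStr A) (h : ∀ a, ∀ b ∈ M.lcs 2, M.mul a b = 0) :
    M.lcs 3 = ⊥ := by
  refine span_eq_bot.2 ?_
  rintro _ ⟨a, b, hb, rfl⟩
  exact h a b hb

theorem exists_forms (M : ZinbielStr A) {V : Submodule ℂ A} {e₂ e₃ : A} (he₂ : e₂ ≠ 0)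
    (he₃ : e₃ ≠ 0) (h₁₁ : ∀ x y : V, M.mul x y ∈ ℂ ∙ e₂) (h₁₂ : ∀ x : V, M.mul x e₂ ∈ ℂ ∙ e₃)
    (h₂₁ : ∀ x : V, M.mul e₂ x ∈ ℂ ∙ e₃) :
    ∃ (β : V →ₗ[ℂ] V →ₗ[ℂ] ℂ) (L R : V →ₗ[ℂ] ℂ), (∀ x y : V, M.mul x y = β x y • e₂) ∧
      (∀ x : V, M.mul x e₂ = L x • e₃) ∧ ∀ x : V, M.mul e₂ x = R x • e₃ := by
  obtain ⟨φ₂, hφ₂⟩ := Projective.exists_dual_eq_one ℂ he₂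
  obtain ⟨φ₃, hφ₃⟩ := Projective.exists_dual_eq_one ℂ he₃
  exact ⟨(M.mul.compl₁₂ V.subtype V.subtype).compr₂ φ₂, φ₃ ∘ₗ M.mul.flip e₂ ∘ₗ V.subtype,
    φ₃ ∘ₗ M.mul e₂ ∘ₗ V.subtype, fun x y => eq_smul_of_mem_span_singleton hφ₂ (h₁₁ x y),
    fun x => eq_smul_of_mem_span_singleton hφ₃ (h₁₂ x),
    fun x => eq_smul_of_mem_span_singleton hφ₃ (h₂₁ x)⟩

theorem zinbiel_forms (M : ZinbielStr A) {V : Submodule ℂ A} {e₂ e₃ : A} (he₃ : e₃ ≠ 0)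
    {β : V →ₗ[ℂ] V →ₗ[ℂ] ℂ} {L R : V →ₗ[ℂ] ℂ} (h₁₁ : ∀ x y : V, M.mul x y = β x y • e₂)
    (h₁₂ : ∀ x : V, M.mul x e₂ = L x • e₃) (h₂₁ : ∀ x : V, M.mul e₂ x = R x • e₃) (x y z : V) :
    β x y * R z = L x * (β y z + β z y) := by
  have h := M.zinbiel x y z
  rw [h₁₁ x y, h₁₁ y z, h₁₁ z y, map_smul, LinearMap.smul_apply, h₂₁, map_smul, map_smul, h₁₂,
    smul_smul, smul_smul, smul_smul, ← add_smul] at h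
  rw [smul_left_injective ℂ he₃ h]
  ring

/-- `kfTable e k i j` is the product `e i ∘ e j` in `KF_5^(k+1)`; `e i` is the paper's `e_(i+1)`. -/
def kfTable (e : Fin 5 → A) : Fin 3 → Fin 5 → Fin 5 → A :=
  ![![![e 1, e 2, 0, 0, 0],
      ![(2 : ℂ) • e 2, 0, 0, 0, 0],
      ![0, 0, 0, 0, 0],
      ![0, 0, 0, 0, 0],
      ![0, 0, 0, 0, 0]],
    ![![0, e 2, 0, e 1, 0],
      ![0, 0, 0, 0, 0],
      ![0, 0, 0, 0, 0],
      ![-e 1, 0, 0, 0, 0],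
      ![0, 0, 0, 0, 0]],
    ![![0, e 2, 0, e 1, 0],
      ![0, 0, 0, 0, 0],
      ![0, 0, 0, 0, 0],
      ![-e 1, 0, 0, 0, 0],
      ![0, e 2, 0, 0, 0]]]

def IsKFBasis (M : ZinbielStr A) (k : Fin 3) (e : Basis (Fin 5) ℂ A) : Prop :=
  ∀ i j, M.mul (e i) (e j) = kfTable e k i j

namespace IsNaturalGrading

variable {M : ZinbielStr A} {Ag : ℕ → Submodule ℂ A}

theorem mul_eq_zero {t : ℕ} (hg : M.IsNaturalGrading t Ag) {i j : ℕ} (hij : t < i + j)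
    {x y : A} (hx : x ∈ Ag i) (hy : y ∈ Ag j) : M.mul x y = 0 := by
  simpa [hg.high_deg _ hij] using hg.mul_mem i j x y hx hy

theorem iSup_ge_three_eq (hg : M.IsNaturalGrading 3 Ag) : ⨆ j, ⨆ (_ : 3 ≤ j), Ag j = Ag 3 := by
  have htail : ⨆ j, ⨆ (_ : 3 + 1 ≤ j), Ag j = ⊥ := iSup₂_eq_bot.2 fun j hj => hg.high_deg j hj
  rw [iSup_ge_eq_sup_iSup_ge, htail, sup_bot_eq]

theorem lcs_three (hg : M.IsNaturalGrading 3 Ag) : M.lcs 3 = Ag 3 := by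
  rw [hg.lcs_eq 3 (by norm_num) le_rfl, hg.iSup_ge_three_eq]

theorem lcs_two (hg : M.IsNaturalGrading 3 Ag) : M.lcs 2 = Ag 2 ⊔ Ag 3 := by
  rw [hg.lcs_eq 2 (by norm_num) (by norm_num), iSup_ge_eq_sup_iSup_ge, hg.iSup_ge_three_eq]

theorem sup_eq_top (hg : M.IsNaturalGrading 3 Ag) : Ag 1 ⊔ Ag 2 ⊔ Ag 3 = ⊤ := by
  have h := hg.lcs_eq 1 le_rfl (by norm_num)
  rw [iSup_ge_eq_sup_iSup_ge, ← hg.lcs_eq 2 (by norm_num) (by norm_num), hg.lcs_two] at h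
  rw [sup_assoc, ← h]
  rfl

theorem mem_of_le (hg : M.IsNaturalGrading 3 Ag) {S : Submodule ℂ A} (h1 : Ag 1 ≤ S)
    (h2 : Ag 2 ≤ S) (h3 : Ag 3 ≤ S) (x : A) : x ∈ S := by
  have : ⊤ ≤ S := hg.sup_eq_top ▸ sup_le (sup_le h1 h2) h3
  exact this mem_top

theorem disjoint_one (hg : M.IsNaturalGrading 3 Ag) : Disjoint (Ag 1) (Ag 2 ⊔ Ag 3) :=
  (hg.indep 1).mono_right <| sup_le
    (le_iSup₂ (f := fun j (_ : j ≠ 1) => Ag j) 2 (by norm_num))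
    (le_iSup₂ (f := fun j (_ : j ≠ 1) => Ag j) 3 (by norm_num))

theorem disjoint_two (hg : M.IsNaturalGrading 3 Ag) : Disjoint (Ag 2) (Ag 3) :=
  (hg.indep 2).mono_right (le_iSup₂ (f := fun j (_ : j ≠ 2) => Ag j) 3 (by norm_num))

theorem finrank_add [FiniteDimensional ℂ A] (hg : M.IsNaturalGrading 3 Ag) :
    finrank ℂ (Ag 1) + finrank ℂ (Ag 2) + finrank ℂ (Ag 3) = finrank ℂ A := by
  have h23 := finrank_sup_add_finrank_inf_eq (Ag 2) (Ag 3)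
  have h123 := finrank_sup_add_finrank_inf_eq (Ag 1) (Ag 2 ⊔ Ag 3)
  rw [hg.disjoint_two.eq_bot, finrank_bot, add_zero] at h23
  rw [hg.disjoint_one.eq_bot, finrank_bot, add_zero, ← sup_assoc, hg.sup_eq_top, finrank_top]
    at h123
  omega

theorem eq_zero_of_add_add_eq_zero (hg : M.IsNaturalGrading 3 Ag) {x y z : A} (hx : x ∈ Ag 1)
    (hy : y ∈ Ag 2) (hz : z ∈ Ag 3) (h : x + y + z = 0) : x = 0 ∧ y = 0 ∧ z = 0 := by
  have hx0 : x = 0 := disjoint_def.1 hg.disjoint_one x hx <| by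
    rw [add_assoc, add_eq_zero_iff_eq_neg] at h
    exact h ▸ neg_mem (add_mem (mem_sup_left hy) (mem_sup_right hz))
  rw [hx0, zero_add, add_eq_zero_iff_eq_neg] at h
  have hy0 : y = 0 := disjoint_def.1 hg.disjoint_two y hy (h ▸ neg_mem hz)
  exact ⟨hx0, hy0, by simpa [hy0] using h⟩

theorem mul_eq_zero_of_forall_one (hg : M.IsNaturalGrading 3 Ag) {j : ℕ} (hj : 2 ≤ j) {y : A}
    (hy : y ∈ Ag j) (h : ∀ x ∈ Ag 1, M.mul x y = 0) (x : A) : M.mul x y = 0 := by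
  refine hg.mem_of_le (S := LinearMap.ker (M.mul.flip y)) (fun z hz => h z hz)
    (fun z hz => hg.mul_eq_zero (by omega) hz hy) (fun z hz => hg.mul_eq_zero (by omega) hz hy) x

theorem mul_eq_zero_of_mem_three_right (hg : M.IsNaturalGrading 3 Ag) {y : A} (hy : y ∈ Ag 3)
    (x : A) : M.mul x y = 0 :=
  hg.mul_eq_zero_of_forall_one (by norm_num) hy (fun _ hx => hg.mul_eq_zero (by norm_num) hx hy) x

theorem mul_eq_zero_of_mem_three_left (hg : M.IsNaturalGrading 3 Ag) {x : A} (hx : x ∈ Ag 3)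
    (y : A) : M.mul x y = 0 :=
  hg.mem_of_le (S := LinearMap.ker (M.mul x)) (fun _ hy => hg.mul_eq_zero (by norm_num) hx hy)
    (fun _ hy => hg.mul_eq_zero (by norm_num) hx hy)
    (fun _ hy => hg.mul_eq_zero (by norm_num) hx hy) y

theorem lcs_three_eq_bot_of (hg : M.IsNaturalGrading 3 Ag)
    (h : ∀ x ∈ Ag 1, ∀ y ∈ Ag 2, M.mul x y = 0) : M.lcs 3 = ⊥ := by
  refine M.lcs_three_eq_bot fun a b hb => ?_
  obtain ⟨y, hy, z, hz, rfl⟩ := mem_sup.1 (hg.lcs_two ▸ hb)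
  rw [map_add, hg.mul_eq_zero_of_forall_one le_rfl hy (fun x hx => h x hx y hy),
    hg.mul_eq_zero_of_mem_three_right hz, add_zero]

theorem exists_mul_one_two_ne_zero (hg : M.IsNaturalGrading 3 Ag) (h3 : M.lcs 3 ≠ ⊥) :
    ∃ x ∈ Ag 1, ∃ y ∈ Ag 2, M.mul x y ≠ 0 := by
  by_contra! h
  exact h3 (hg.lcs_three_eq_bot_of h)

theorem exists_mul_one_one_ne_zero (hg : M.IsNaturalGrading 3 Ag) (h2 : Ag 2 ≠ ⊥) :
    ∃ x ∈ Ag 1, ∃ y ∈ Ag 1, M.mul x y ≠ 0 := by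
  by_contra! h
  have hmul : ∀ a b, M.mul a b ∈ Ag 3 := by
    intro a b
    refine hg.mem_of_le (S := (Ag 3).comap (M.mul.flip b)) ?_ ?_ ?_ a <;> intro x hx <;>
      refine hg.mem_of_le (S := (Ag 3).comap (M.mul x)) ?_ ?_ ?_ b <;> intro y hy <;>
      simp only [mem_comap]
    · exact h x hx y hy ▸ zero_mem _
    all_goals first
      | exact hg.mul_mem _ _ x y hx hy
      | exact hg.mul_eq_zero (by norm_num) hx hy ▸ zero_mem _
  refine h2 (eq_bot_iff.2 fun y hy => disjoint_def.1 hg.disjoint_two y hy ?_)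
  exact M.lcs_two_le hmul (hg.lcs_two ▸ mem_sup_left hy)

theorem two_ne_bot (hg : M.IsNaturalGrading 3 Ag) (h₃ : M.lcs 3 ≠ ⊥) : Ag 2 ≠ ⊥ := by
  obtain ⟨x, -, y, hy, hxy⟩ := hg.exists_mul_one_two_ne_zero h₃
  rintro h
  rw [h, mem_bot] at hy
  simp [hy] at hxy

theorem finrank_two_eq_one_and_finrank_three_eq_one [FiniteDimensional ℂ A]
    (hg : M.IsNaturalGrading 3 Ag) (h₅ : finrank ℂ A = 5) (hV : finrank ℂ (Ag 1) = 3)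
    (h₃ : M.lcs 3 ≠ ⊥) : finrank ℂ (Ag 2) = 1 ∧ finrank ℂ (Ag 3) = 1 := by
  have h₂ : finrank ℂ (Ag 2) ≠ 0 := finrank_eq_zero.not.2 (hg.two_ne_bot h₃)
  have h₃ : finrank ℂ (Ag 3) ≠ 0 := finrank_eq_zero.not.2 (hg.lcs_three ▸ h₃)
  have := hg.finrank_add
  omega

theorem exists_basis (hg : M.IsNaturalGrading 3 Ag) (h₅ : finrank ℂ A = 5) {u v w : Ag 1}
    (huvw : LinearIndependent ℂ ![u, v, w]) {p q : A} (hp : p ∈ Ag 2) (hp₀ : p ≠ 0)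
    (hq : q ∈ Ag 3) (hq₀ : q ≠ 0) : ∃ b : Basis (Fin 5) ℂ A, ⇑b = ![↑u, p, q, ↑v, ↑w] := by
  have hli : LinearIndependent ℂ ![(u : A), p, q, v, w] := by
    refine Fintype.linearIndependent_iff.2 fun g hg₀ => ?_
    simp only [Fin.sum_univ_five, Matrix.cons_val] at hg₀
    obtain ⟨h₁, h₂, h₃⟩ := hg.eq_zero_of_add_add_eq_zero
      (add_mem (add_mem (smul_mem _ (g 0) u.2) (smul_mem _ (g 3) v.2)) (smul_mem _ (g 4) w.2))
      (smul_mem _ (g 1) hp) (smul_mem _ (g 2) hq) (by rw [← hg₀]; abel)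
    have h₁' := Fintype.linearIndependent_iff.1 (huvw.map' _ (Ag 1).ker_subtype) ![g 0, g 3, g 4]
      (by simpa [Fin.sum_univ_three] using h₁)
    intro i
    fin_cases i
    · simpa using h₁' 0
    · simpa [hp₀] using h₂
    · simpa [hq₀] using h₃
    · simpa using h₁' 1
    · simpa using h₁' 2
  exact ⟨basisOfLinearIndependentOfCardEqFinrank hli (by simp [h₅]),
    coe_basisOfLinearIndependentOfCardEqFinrank _ _⟩

theorem exists_isKFBasis_zero (hg : M.IsNaturalGrading 3 Ag) (h₅ : finrank ℂ A = 5)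
    {u v w : Ag 1} (huvw : LinearIndependent ℂ ![u, v, w])
    (hv : ∀ x : Ag 1, M.mul x v = 0 ∧ M.mul v x = 0)
    (hw : ∀ x : Ag 1, M.mul x w = 0 ∧ M.mul w x = 0)
    (hq₀ : M.mul u (M.mul u u) ≠ 0) : ∃ e, M.IsKFBasis 0 e := by
  set p := M.mul u u
  set q := M.mul u p
  have hp : p ∈ Ag 2 := hg.mul_mem 1 1 _ _ u.2 u.2
  have hq : q ∈ Ag 3 := hg.mul_mem 1 2 _ _ u.2 hp
  have hp₀ : p ≠ 0 := fun h => hq₀ (by simp [q, h])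
  obtain ⟨e, he⟩ := hg.exists_basis h₅ huvw hp hp₀ hq hq₀
  have hpu : M.mul p u = (2 : ℂ) • q := by rw [two_smul]; exact M.zinbiel u u u
  have hpv : M.mul p v = 0 := by simp [p, M.zinbiel, hv]
  have hpw : M.mul p w = 0 := by simp [p, M.zinbiel, hw]
  have hvp : M.mul v p = 0 :=
    eq_zero_of_add_self_eq_zero ℂ (by simpa [(hv u).2] using (M.zinbiel v u u).symm)
  have hwp : M.mul w p = 0 :=
    eq_zero_of_add_self_eq_zero ℂ (by simpa [(hw u).2] using (M.zinbiel w u u).symm)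
  refine ⟨e, fun i j => ?_⟩
  fin_cases i <;> fin_cases j <;>
    simp [he, kfTable, hpu, hpv, hpw, hvp, hwp, hv, hw, hg.mul_eq_zero_of_mem_three_left hq,
      hg.mul_eq_zero_of_mem_three_right hq, hg.mul_eq_zero (by norm_num) hp hp] <;> rfl

theorem exists_isKFBasis_of_anticomm (hg : M.IsNaturalGrading 3 Ag) (h₅ : finrank ℂ A = 5)
    {u v w : Ag 1} (huvw : LinearIndependent ℂ ![u, v, w])
    (hanti : ∀ x y : Ag 1, M.mul y x = -M.mul x y) (hw : ∀ x : Ag 1, M.mul x w = 0)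
    (hv : M.mul v (M.mul u v) = 0) (hq₀ : M.mul u (M.mul u v) ≠ 0)
    (hwp : M.mul w (M.mul u v) = 0 ∨ M.mul w (M.mul u v) = M.mul u (M.mul u v)) :
    ∃ k e, M.IsKFBasis k e := by
  set p := M.mul u v
  set q := M.mul u p
  have hp : p ∈ Ag 2 := hg.mul_mem 1 1 _ _ u.2 v.2
  have hq : q ∈ Ag 3 := hg.mul_mem 1 2 _ _ u.2 hp
  have hp₀ : p ≠ 0 := fun h => hq₀ (by simp [q, h])
  obtain ⟨e, he⟩ := hg.exists_basis h₅ huvw hp hp₀ hq hq₀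
  have hself : ∀ x : Ag 1, M.mul x x = 0 := fun x =>
    eq_zero_of_add_self_eq_zero ℂ (by rw [← eq_neg_iff_add_eq_zero]; exact hanti x x)
  have hwx : ∀ x : Ag 1, M.mul w x = 0 := fun x => by rw [hanti, hw, neg_zero]
  have hvu : M.mul v u = -p := hanti u v
  have hpu : M.mul p u = 0 := by simp [p, M.zinbiel, hanti u v]
  have hpv : M.mul p v = 0 := by simp [p, M.zinbiel, hself]
  have hpw : M.mul p w = 0 := by simp [p, M.zinbiel, hw, hwx]
  rcases hwp with hwp | hwp <;> [refine ⟨1, e, fun i j => ?_⟩; refine ⟨2, e, fun i j => ?_⟩] <;>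
    fin_cases i <;> fin_cases j <;>
    simp [he, kfTable, hself, hw, hwx, hvu, hpu, hpv, hpw, hv, hwp,
      hg.mul_eq_zero_of_mem_three_left hq, hg.mul_eq_zero_of_mem_three_right hq,
      hg.mul_eq_zero (by norm_num) hp hp] <;> rfl

theorem exists_isKFBasis_of_eq_mul_mul (hg : M.IsNaturalGrading 3 Ag) (h₅ : finrank ℂ A = 5)
    (hV : finrank ℂ (Ag 1) = 3) {e₂ e₃ : A} (he₃ : e₃ ≠ 0) {L : Ag 1 →ₗ[ℂ] ℂ} (hL : L ≠ 0)
    {c : ℂ} (hc : c ≠ 0) (h₁₁ : ∀ x y : Ag 1, M.mul x y = (c * L x * L y) • e₂)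
    (h₁₂ : ∀ x : Ag 1, M.mul x e₂ = L x • e₃) : ∃ e, M.IsKFBasis 0 e := by
  obtain ⟨u, v, w, huvw, hu, hv, hw⟩ := exists_linearIndependent_of_ker hL hV
  refine hg.exists_isKFBasis_zero h₅ huvw (fun x => by simp [h₁₁, hv])
    (fun x => by simp [h₁₁, hw]) ?_
  rw [h₁₁, map_smul, h₁₂, smul_smul]
  exact smul_ne_zero (by simp [hc, hu]) he₃

theorem exists_isKFBasis_of_isAlt (hg : M.IsNaturalGrading 3 Ag) (h₅ : finrank ℂ A = 5)
    (hV : finrank ℂ (Ag 1) = 3) {e₂ e₃ : A} (he₃ : e₃ ≠ 0) {β : Ag 1 →ₗ[ℂ] Ag 1 →ₗ[ℂ] ℂ}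
    {L : Ag 1 →ₗ[ℂ] ℂ} (hβ : β.IsAlt) (hβ₀ : β ≠ 0) (hL : L ≠ 0)
    (h₁₁ : ∀ x y : Ag 1, M.mul x y = β x y • e₂) (h₁₂ : ∀ x : Ag 1, M.mul x e₂ = L x • e₃) :
    ∃ k e, M.IsKFBasis k e := by
  obtain ⟨u, v, w, huvw, hu, hv, huv, hwβ, hLw⟩ := hβ.exists_linearIndependent hβ₀ hL hV
  have hmul : ∀ x y z : Ag 1, M.mul x (M.mul y z) = (β y z * L x) • e₃ := fun x y z => by
    rw [h₁₁, map_smul, h₁₂, smul_smul]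
  refine hg.exists_isKFBasis_of_anticomm h₅ huvw
    (fun x y => by rw [h₁₁, h₁₁, ← hβ.neg, neg_smul])
    (fun x => by rw [h₁₁, ← hβ.neg, hwβ, neg_zero, zero_smul])
    (by rw [hmul, hv, mul_zero, zero_smul])
    (by rw [hmul]; exact smul_ne_zero (mul_ne_zero huv hu) he₃) ?_
  rcases hLw with h | h
  · exact Or.inl (by rw [hmul, h, mul_zero, zero_smul])
  · exact Or.inr (by rw [hmul, hmul, h])

theorem exists_isKFBasis (hg : M.IsNaturalGrading 3 Ag) (hqf : M.IsQuasiFiliform 5)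
    (hV : finrank ℂ (Ag 1) = 3) : ∃ k e, M.IsKFBasis k e := by
  obtain ⟨h₅, h₃, -⟩ := hqf
  have := Module.finite_of_finrank_eq_succ h₅
  obtain ⟨hd₂, hd₃⟩ := hg.finrank_two_eq_one_and_finrank_three_eq_one h₅ hV h₃
  obtain ⟨e₂, he₂, h₂⟩ := exists_eq_span_singleton_of_finrank_eq_one hd₂
  obtain ⟨e₃, he₃, h₃'⟩ := exists_eq_span_singleton_of_finrank_eq_one hd₃
  have he₂' : e₂ ∈ Ag 2 := h₂ ▸ mem_span_singleton_self e₂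
  obtain ⟨β, L, R, h₁₁, h₁₂, h₂₁⟩ := M.exists_forms he₂ he₃
    (fun x y => h₂ ▸ hg.mul_mem 1 1 _ _ x.2 y.2) (fun x => h₃' ▸ hg.mul_mem 1 2 _ _ x.2 he₂')
    (fun x => h₃' ▸ hg.mul_mem 2 1 _ _ he₂' x.2)
  have hL : L ≠ 0 := by
    rintro rfl
    obtain ⟨x, hx, y, hy, hxy⟩ := hg.exists_mul_one_two_ne_zero h₃
    obtain ⟨a, rfl⟩ := mem_span_singleton.1 (h₂ ▸ hy)
    simp [h₁₂ ⟨x, hx⟩] at hxy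
  have hβ : β ≠ 0 := by
    rintro rfl
    obtain ⟨x, hx, y, hy, hxy⟩ := hg.exists_mul_one_one_ne_zero (hg.two_ne_bot h₃)
    simp [h₁₁ ⟨x, hx⟩ ⟨y, hy⟩] at hxy
  rcases isAlt_or_exists_eq_mul_mul hL (M.zinbiel_forms he₃ h₁₁ h₁₂ h₂₁) with hAlt | ⟨c, hc⟩
  · exact hg.exists_isKFBasis_of_isAlt h₅ hV he₃ hAlt hβ hL h₁₁ h₁₂
  · have hc₀ : c ≠ 0 := by
      rintro rfl
      exact hβ (LinearMap.ext₂ fun x y => by simp [hc])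
    exact ⟨0, hg.exists_isKFBasis_of_eq_mul_mul h₅ hV he₃ hL hc₀ (fun x y => by rw [h₁₁, hc]) h₁₂⟩

end IsNaturalGrading

namespace IsKFBasis

variable {M : ZinbielStr A} {e : Basis (Fin 5) ℂ A}

theorem mul_mul_self_ne_zero (he : M.IsKFBasis 0 e) : M.mul (M.mul (e 0) (e 0)) (e 0) ≠ 0 := by
  simp [he 0 0, he 1 0, kfTable, e.ne_zero]

theorem mul_mul_self_eq_zero {k : Fin 3} (he : M.IsKFBasis k e) (hk : k ≠ 0) (x y : A) :
    M.mul (M.mul x x) y = 0 := by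
  have hsymm : ∀ x x', M.mul x x' + M.mul x' x ∈ ℂ ∙ e 2 :=
    LinearMap.mem_of_forall_basis_mem e e (M.mul + M.mul.flip) fun i j => by
      fin_cases k
      · exact absurd rfl hk
      all_goals fin_cases i <;> fin_cases j <;> simp [he _ _, kfTable, mem_span_singleton_self]
  have he₂ : M.mul (e 2) = 0 := e.ext fun j => by
    fin_cases k <;> fin_cases j <;> simp [he _ _, kfTable]
  obtain ⟨a, ha⟩ := mem_span_singleton.1 (hsymm x x)
  refine eq_zero_of_add_self_eq_zero ℂ ?_
  rw [← LinearMap.add_apply, ← map_add, ← ha]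
  simp [he₂]

theorem mul_mul_eq_zero_of_forall_mul_eq_zero (he : M.IsKFBasis 1 e) {x : A}
    (hx : ∀ y, M.mul y x = 0) (y z : A) : M.mul x (M.mul y z) = 0 := by
  have h₃ : M.mul (e 3) = -(e.coord 0).smulRight (e 1) := e.ext fun j => by
    fin_cases j <;> simp [he _ _, kfTable]
  have hx₀ : e.repr x 0 = 0 := by
    have h := hx (e 3)
    rw [h₃] at h
    simpa [e.ne_zero] using h
  have h₁ : M.mul x (e 1) = 0 := by
    have : M.mul.flip (e 1) = (e.coord 0).smulRight (e 2) := e.ext fun i => by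
      fin_cases i <;> simp [he _ _, kfTable]
    simpa [hx₀] using LinearMap.congr_fun this x
  have h₂ : M.mul x (e 2) = 0 := by
    have : M.mul.flip (e 2) = 0 := e.ext fun i => by
      fin_cases i <;> simp [he _ _, kfTable]
    simpa using LinearMap.congr_fun this x
  have : M.mul.compr₂ (M.mul x) = 0 := LinearMap.ext_basis e e fun i j => by
    fin_cases i <;> fin_cases j <;> simp [he _ _, kfTable, h₁, h₂]
  simpa using LinearMap.congr_fun₂ this y z

theorem exists_forall_mul_eq_zero_and_mul_mul_ne_zero (he : M.IsKFBasis 2 e) :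
    ∃ x, (∀ y, M.mul y x = 0) ∧ M.mul x (M.mul (e 0) (e 3)) ≠ 0 := by
  refine ⟨e 4, fun y => ?_, by simp [he 0 3, he 4 1, kfTable, e.ne_zero]⟩
  have : M.mul.flip (e 4) = 0 := e.ext fun i => by fin_cases i <;> simp [he _ _, kfTable]
  simpa using LinearMap.congr_fun this y

theorem not_isKFBasis_of_lt {k k' : Fin 3} {e' : Basis (Fin 5) ℂ A} (he : M.IsKFBasis k e)
    (hkk' : k < k') : ¬ M.IsKFBasis k' e' := by
  intro he'
  fin_cases k <;> fin_cases k' <;> simp at hkk'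
  · exact he.mul_mul_self_ne_zero (he'.mul_mul_self_eq_zero (by decide) _ _)
  · exact he.mul_mul_self_ne_zero (he'.mul_mul_self_eq_zero (by decide) _ _)
  · obtain ⟨x, hx, hx₀⟩ := he'.exists_forall_mul_eq_zero_and_mul_mul_ne_zero
    exact hx₀ (he.mul_mul_eq_zero_of_forall_mul_eq_zero hx _ _)

theorem eq_of_isKFBasis {k k' : Fin 3} {e' : Basis (Fin 5) ℂ A} (he : M.IsKFBasis k e)
    (he' : M.IsKFBasis k' e') : k = k' := by
  rcases lt_trichotomy k k' with h | h | h
  · exact absurd he' (he.not_isKFBasis_of_lt h)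
  · exact h
  · exact absurd he (he'.not_isKFBasis_of_lt h)

end IsKFBasis

theorem dim5_type_one_classification {A : Type*} [AddCommGroup A] [Module ℂ A]
    (M : ZinbielStr A)
    (Ag : ℕ → Submodule ℂ A)
    (hqf : M.IsQuasiFiliform 5) (hg : M.IsNaturalGrading 3 Ag)
    (htype : Module.finrank ℂ (Ag 1) = 3) :
    ∃! k : Fin 3, ∃ e : Module.Basis (Fin 5) ℂ A, ∀ i j : Fin 5,
      M.mul (e i) (e j) =
        ![![![e 1, e 2, 0, 0, 0],
         ![(2 : ℂ) • e 2, 0, 0, 0, 0],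
         ![0, 0, 0, 0, 0],
         ![0, 0, 0, 0, 0],
         ![0, 0, 0, 0, 0]],
          ![![0, e 2, 0, e 1, 0],
         ![0, 0, 0, 0, 0],
         ![0, 0, 0, 0, 0],
         ![-e 1, 0, 0, 0, 0],
         ![0, 0, 0, 0, 0]],
          ![![0, e 2, 0, e 1, 0],
         ![0, 0, 0, 0, 0],
         ![0, 0, 0, 0, 0],
         ![-e 1, 0, 0, 0, 0],
         ![0, e 2, 0, 0, 0]]] k i j := by
  obtain ⟨k, e, he⟩ := hg.exists_isKFBasis hqf htype
  exact ⟨k, ⟨e, he⟩, fun k' ⟨e', he'⟩ => IsKFBasis.eq_of_isKFBasis (e := e') he' he⟩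

end ZinbielStr
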